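/- arXiv:1101.3445 — 3 statements merged into one kernel-verified Lean document; each statement's English description precedes it below -/
import Mathlib

section
/- If a compact invariant set Λ of a flow contains a hyperbolic singularity σ and a point x with x ∈ W^s(σ) ∩ W^u(σ) and x ≠ σ, and Λ = {σ} ∪ O(x) (the closure-free union of σ with the orbit of x), then the flow restricted to Λ is not topologically mixing. -/
open Filter Set Metric TensorProduct

section Defs
variable {M : Type*}

/-- A continuous flow on a topological space. -/
def IsFlow [TopologicalSpace M] (φ : ℝ → M → M) : Prop :=
  Continuous (fun p : ℝ × M => φ p.1 p.2) ∧ (∀ x, φ 0 x = x) ∧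
    ∀ s t x, φ (s + t) x = φ s (φ t x)

def InvariantSet (φ : ℝ → M → M) (Λ : Set M) : Prop :=
  ∀ t : ℝ, ∀ x ∈ Λ, φ t x ∈ Λ

def orbitOf (φ : ℝ → M → M) (p : M) : Set M := Set.range fun t : ℝ => φ t p

/-- A critical point: singularity or periodic point. -/
def IsCriticalPt (φ : ℝ → M → M) (p : M) : Prop := ∃ T : ℝ, 0 < T ∧ φ T p = p

/-- `K` is a spacing constant for `ε`: any `K`-spaced weak specification
(two orbit segments of points of `Λ`, parametrized over `[a₁,b₁]` and `[a₂,b₂]`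
with `a₂ ≥ b₁ + K`) is `ε`-shadowed by a point of `Λ`. -/
def SpecConst [MetricSpace M] (φ : ℝ → M → M) (Λ : Set M) (ε K : ℝ) : Prop :=
  ∀ a₁ b₁ a₂ b₂ : ℝ, a₁ ≤ b₁ → a₂ ≤ b₂ → b₁ + K ≤ a₂ →
    ∀ x ∈ Λ, ∀ y ∈ Λ, ∃ z ∈ Λ,
      (∀ t ∈ Set.Icc a₁ b₁, dist (φ t z) (φ (t - a₁) x) < ε) ∧
      (∀ t ∈ Set.Icc a₂ b₂, dist (φ t z) (φ (t - a₂) y) < ε)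

/-- The weak specification property on `Λ`. -/
def WeakSpec [MetricSpace M] (φ : ℝ → M → M) (Λ : Set M) : Prop :=
  ∀ ε : ℝ, 0 < ε → ∃ K : ℝ, 0 < K ∧ SpecConst φ Λ ε K

/-- Topological mixing of the flow restricted to `Λ`. -/
def TopMixingOn [TopologicalSpace M] (φ : ℝ → M → M) (Λ : Set M) : Prop :=
  ∀ U V : Set M, IsOpen U → IsOpen V → (U ∩ Λ).Nonempty → (V ∩ Λ).Nonempty →
    ∃ N : ℝ, 0 < N ∧ ∀ t : ℝ, N ≤ t → (φ t '' (V ∩ Λ) ∩ (U ∩ Λ)).Nonempty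

/-- Topological transitivity of the flow restricted to `Λ`. -/
def TopTransOn [TopologicalSpace M] (φ : ℝ → M → M) (Λ : Set M) : Prop :=
  ∀ U V : Set M, IsOpen U → IsOpen V → (U ∩ Λ).Nonempty → (V ∩ Λ).Nonempty →
    ∃ t : ℝ, 0 < t ∧ (φ t '' (V ∩ Λ) ∩ (U ∩ Λ)).Nonempty

/-- The stable set `W^s(σ)` of a point (e.g. a singularity). -/
def WsPoint [TopologicalSpace M] (φ : ℝ → M → M) (σ : M) : Set M :=
  {y | Filter.Tendsto (fun t : ℝ => φ t y) Filter.atTop (nhds σ)}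

/-- The unstable set `W^u(σ)` of a point (e.g. a singularity). -/
def WuPoint [TopologicalSpace M] (φ : ℝ → M → M) (σ : M) : Set M :=
  {y | Filter.Tendsto (fun t : ℝ => φ t y) Filter.atBot (nhds σ)}

/-- The strong stable set `W^{ss}(p)`. -/
def Wss [MetricSpace M] (φ : ℝ → M → M) (p : M) : Set M :=
  {y | Filter.Tendsto (fun t : ℝ => dist (φ t y) (φ t p)) Filter.atTop (nhds 0)}

/-- The strong unstable set `W^{uu}(p)`. -/
def Wuu [MetricSpace M] (φ : ℝ → M → M) (p : M) : Set M :=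
  {y | Filter.Tendsto (fun t : ℝ => dist (φ t y) (φ t p)) Filter.atBot (nhds 0)}

/-- The stable set of the orbit of `p`: `W^s(O(p)) = ⋃_t W^{ss}(X_t(p))`. -/
def WsOrb [MetricSpace M] (φ : ℝ → M → M) (p : M) : Set M := ⋃ s : ℝ, Wss φ (φ s p)

/-- The unstable set of the orbit of `p`. -/
def WuOrb [MetricSpace M] (φ : ℝ → M → M) (p : M) : Set M := ⋃ s : ℝ, Wuu φ (φ s p)

end Defs

section VF
variable {E : Type*} [NormedAddCommGroup E] [NormedSpace ℝ E]

/-- `φ` is the flow generated by the vector field `X`. -/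
def GeneratedBy (X : E → E) (φ : ℝ → E → E) : Prop :=
  (∀ x, φ 0 x = x) ∧ (∀ s t x, φ (s + t) x = φ s (φ t x)) ∧
    ∀ x t, HasDerivAt (fun s => φ s x) (X (φ t x)) t

/-- The complexification of a continuous real-linear endomorphism. -/
noncomputable def cxEnd (A : E →L[ℝ] E) : Module.End ℂ (ℂ ⊗[ℝ] E) :=
  (A : E →ₗ[ℝ] E).baseChange ℂ

/-- A hyperbolic singularity: `X σ = 0` and no eigenvalue of `DX(σ)` has zero real part. -/
def HypSing (X : E → E) (σ : E) : Prop :=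
  X σ = 0 ∧ ∀ μ ∈ spectrum ℂ (cxEnd (fderiv ℝ X σ)), μ.re ≠ 0

/-- A hyperbolic periodic point: a regular point of period `T > 0` such that no
characteristic multiplier (eigenvalue of `Dφ_T(p)` other than the simple eigenvalue `1`
coming from the flow direction) lies on the unit circle. -/
def HypPeriodic (X : E → E) (φ : ℝ → E → E) (p : E) : Prop :=
  X p ≠ 0 ∧ ∃ T : ℝ, 0 < T ∧ φ T p = p ∧
    (∀ μ ∈ spectrum ℂ (cxEnd (fderiv ℝ (φ T) p)), μ = 1 ∨ ‖μ‖ ≠ 1) ∧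
    Module.finrank ℂ (Module.End.maxGenEigenspace (cxEnd (fderiv ℝ (φ T) p)) 1) = 1

/-- A hyperbolic critical element: hyperbolic singularity or hyperbolic periodic point. -/
def HypCritical (X : E → E) (φ : ℝ → E → E) (p : E) : Prop :=
  HypSing X p ∨ HypPeriodic X φ p

/-- A hyperbolic periodic orbit of saddle type: it has characteristic multipliers both
inside and outside the unit circle. -/
def IsSaddlePeriodic (X : E → E) (φ : ℝ → E → E) (p : E) : Prop :=
  X p ≠ 0 ∧ ∃ T : ℝ, 0 < T ∧ φ T p = p ∧
    (∃ μ ∈ spectrum ℂ (cxEnd (fderiv ℝ (φ T) p)), ‖μ‖ < 1) ∧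
    (∃ μ ∈ spectrum ℂ (cxEnd (fderiv ℝ (φ T) p)), 1 < ‖μ‖)

/-- `Crit(X)`: singularities together with periodic points. -/
def CritSet (X : E → E) (φ : ℝ → E → E) : Set E :=
  {x | X x = 0 ∨ ∃ T : ℝ, 0 < T ∧ φ T x = x}

/-- `PO(X)`: the (regular) periodic points. -/
def PerPts (X : E → E) (φ : ℝ → E → E) : Set E :=
  {x | X x ≠ 0 ∧ ∃ T : ℝ, 0 < T ∧ φ T x = x}

end VF

/-! The orbit of `x` converges to `σ` in both time directions, so it visits a neighbourhood `U`
of `x` separated from `σ` only during a bounded time interval `[a, b]`. Every point of `Λ` in `U`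
lies on that orbit, hence `φ t (U ∩ Λ)` meets `U ∩ Λ` only for `t ≤ b - a`, while mixing
requires this for all large `t`. -/

section HomoclinicLoop

variable {M : Type*} {φ : ℝ → M → M} {Λ U : Set M}

theorem returnTimes_subset_Iic_of_eq_insert_orbit {σ x : M} {a b : ℝ}
    (hadd : ∀ s t y, φ (s + t) y = φ s (φ t y)) (hΛ : Λ = {σ} ∪ orbitOf φ x) (hσU : σ ∉ U)
    (hab : {s | φ s x ∈ U} ⊆ Icc a b) :
    {t | (φ t '' (U ∩ Λ) ∩ (U ∩ Λ)).Nonempty} ⊆ Iic (b - a) := by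
  rintro t ⟨-, ⟨w, ⟨hwU, hwΛ⟩, rfl⟩, hφwU, -⟩
  rw [hΛ] at hwΛ
  rcases hwΛ with rfl | ⟨s, rfl⟩
  · exact absurd hwU hσU
  · rw [← hadd] at hφwU
    have hs := hab hwU
    have hts := hab hφwU
    simp only [mem_Icc] at hs hts
    simp only [mem_Iic]
    linarith

variable [TopologicalSpace M]

theorem exists_nhds_returnTimes_subset_Icc [T2Space M] {σ x : M}
    (hx : x ∈ WsPoint φ σ ∩ WuPoint φ σ) (hxσ : x ≠ σ) :
    ∃ U : Set M, IsOpen U ∧ x ∈ U ∧ σ ∉ U ∧ ∃ a b : ℝ, {s | φ s x ∈ U} ⊆ Icc a b := by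
  obtain ⟨U, V, hU, hV, hxU, hσV, hUV⟩ := t2_separation hxσ
  obtain ⟨b, hb⟩ := eventually_atTop.mp (hx.1.eventually (hV.mem_nhds hσV))
  obtain ⟨a, ha⟩ := eventually_atBot.mp (hx.2.eventually (hV.mem_nhds hσV))
  have hnotV : ∀ s, φ s x ∈ U → φ s x ∉ V := fun s hs hsV => hUV.le_bot ⟨hs, hsV⟩
  refine ⟨U, hU, hxU, fun hσU => hUV.le_bot ⟨hσU, hσV⟩, a, b, fun s hs => ⟨?_, ?_⟩⟩
  · by_contra! h
    exact hnotV s hs (ha s h.le)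
  · by_contra! h
    exact hnotV s hs (hb s h.le)

theorem not_topMixingOn_of_bddAbove_returnTimes (hU : IsOpen U) (hUΛ : (U ∩ Λ).Nonempty)
    (hbdd : BddAbove {t | (φ t '' (U ∩ Λ) ∩ (U ∩ Λ)).Nonempty}) :
    ¬ TopMixingOn φ Λ := by
  intro hmix
  obtain ⟨B, hB⟩ := hbdd
  obtain ⟨N, -, hN⟩ := hmix U U hU hU hUΛ hUΛ
  have hret : max N (B + 1) ∈ {t | (φ t '' (U ∩ Λ) ∩ (U ∩ Λ)).Nonempty} :=
    hN _ (le_max_left _ _)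
  linarith [hB hret, le_max_right N (B + 1)]

end HomoclinicLoop

theorem not_mixing_of_single_homoclinic_orbit_general
    {E : Type*} [NormedAddCommGroup E]
    (φ : ℝ → E → E)
    (hflow : IsFlow φ)
    (Λ : Set E)
    (σ x : E) (hx : x ∈ WsPoint φ σ ∩ WuPoint φ σ) (hxσ : x ≠ σ)
    (hΛ : Λ = {σ} ∪ orbitOf φ x) :
    ¬ TopMixingOn φ Λ := by
  obtain ⟨-, hφ0, hadd⟩ := hflow
  obtain ⟨U, hU, hxU, hσU, a, b, hab⟩ := exists_nhds_returnTimes_subset_Icc hx hxσ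
  have hxΛ : x ∈ Λ := hΛ ▸ Or.inr ⟨0, hφ0 x⟩
  exact not_topMixingOn_of_bddAbove_returnTimes hU ⟨x, hxU, hxΛ⟩
    ⟨b - a, returnTimes_subset_Iic_of_eq_insert_orbit hadd hΛ hσU hab⟩

/-- If `Λ = {σ} ∪ O(x)` where `σ` is a hyperbolic singularity and
`x ≠ σ` satisfies `x ∈ W^s(σ) ∩ W^u(σ)`, then the flow restricted to `Λ` is not
topologically mixing. -/
theorem not_mixing_of_single_homoclinic_orbit
    {E : Type*} [NormedAddCommGroup E] [NormedSpace ℝ E] [FiniteDimensional ℝ E]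
    (X : E → E) (φ : ℝ → E → E) (hX : ContDiff ℝ 1 X)
    (hflow : IsFlow φ) (hgen : GeneratedBy X φ)
    (Λ : Set E) (hΛc : IsCompact Λ) (hΛi : InvariantSet φ Λ)
    (σ x : E) (hσ : HypSing X σ) (hx : x ∈ WsPoint φ σ ∩ WuPoint φ σ) (hxσ : x ≠ σ)
    (hΛ : Λ = {σ} ∪ orbitOf φ x) :
    ¬ TopMixingOn φ Λ :=
  not_mixing_of_single_homoclinic_orbit_general φ hflow Λ σ x hx hxσ hΛ
end

section
/- In dimension 2, Morse–Smale flows cannot be topologically mixing; consequently, on a closed surface no flow in the C^1-open dense set of Morse–Smale flows has the weak specification property, so flows with the robust weak specification property can exist only on manifolds of dimension at least 3. -/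
open Filter Set Metric TensorProduct

/-- The nonwandering set of a flow. -/
def NonWandering {M : Type*} [TopologicalSpace M] (φ : ℝ → M → M) : Set M :=
  {x | ∀ U : Set M, IsOpen U → x ∈ U → ∀ T : ℝ, ∃ t : ℝ, T ≤ t ∧ (φ t '' U ∩ U).Nonempty}

/-- A Morse–Smale-like flow: the nonwandering set is the union of the orbits of finitely
many critical points (singularities and periodic orbits). -/
def MorseSmaleLike {M : Type*} [TopologicalSpace M] (φ : ℝ → M → M) : Prop :=
  ∃ F : Finset M, (∀ p ∈ F, IsCriticalPt φ p) ∧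
    NonWandering φ = ⋃ p ∈ F, orbitOf φ p

/-! Mixing makes every point nonwandering, so a Morse–Smale-like flow covers the space by finitely
many critical orbits. These are compact, hence closed, and two of them are either equal or
disjoint, so each is also open. Since no single orbit is the whole space, there are two distinct
such orbits: disjoint, nonempty, open and invariant, which mixing forbids. Weak specification
implies mixing by shadowing two orbit segments of length zero. -/

theorem isOpen_of_biUnion_eq_univ {X ι : Type*} [TopologicalSpace X] {s : ι → Set X}
    {I : Set ι} (hI : I.Finite) (hcover : ⋃ i ∈ I, s i = univ)
    (hclosed : ∀ i ∈ I, IsClosed (s i))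
    (hdisj : ∀ i ∈ I, ∀ j ∈ I, Disjoint (s i) (s j) ∨ s i = s j) {i : ι} (hi : i ∈ I) :
    IsOpen (s i) := by
  have hcompl : (s i)ᶜ = ⋃ j ∈ {j ∈ I | Disjoint (s i) (s j)}, s j := by
    ext y
    simp only [mem_compl_iff, mem_iUnion₂, mem_sep_iff, exists_prop]
    constructor
    · intro hy
      obtain ⟨j, hj, hyj⟩ := mem_iUnion₂.1 (hcover ▸ mem_univ y)
      refine ⟨j, ⟨hj, (hdisj i hi j hj).resolve_right fun h => hy (h ▸ hyj)⟩, hyj⟩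
    · rintro ⟨j, ⟨-, hij⟩, hyj⟩ hyi
      exact hij.notMem_of_mem_left hyi hyj
  rw [← isClosed_compl_iff, hcompl]
  exact (hI.subset (sep_subset _ _)).isClosed_biUnion fun j hj => hclosed j hj.1

section Orbit

variable {M : Type*} {φ : ℝ → M → M}

theorem mem_orbitOf_self (h0 : ∀ x, φ 0 x = x) (p : M) : p ∈ orbitOf φ p := ⟨0, h0 p⟩

theorem invariantSet_orbitOf (hadd : ∀ s t x, φ (s + t) x = φ s (φ t x)) (p : M) :
    InvariantSet φ (orbitOf φ p) := by
  rintro t _ ⟨s, rfl⟩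
  exact ⟨t + s, hadd t s p⟩

theorem orbitOf_eq_of_mem (hadd : ∀ s t x, φ (s + t) x = φ s (φ t x)) {p x : M}
    (hx : x ∈ orbitOf φ p) : orbitOf φ x = orbitOf φ p := by
  obtain ⟨s, rfl⟩ := hx
  ext y
  constructor
  · rintro ⟨t, rfl⟩
    exact ⟨t + s, hadd t s p⟩
  · rintro ⟨t, rfl⟩
    refine ⟨t - s, ?_⟩
    simp only [← hadd, sub_add_cancel]

theorem orbitOf_disjoint_or_eq (hadd : ∀ s t x, φ (s + t) x = φ s (φ t x)) (p q : M) :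
    Disjoint (orbitOf φ p) (orbitOf φ q) ∨ orbitOf φ p = orbitOf φ q := by
  refine or_iff_not_imp_left.2 fun h => ?_
  obtain ⟨x, hxp, hxq⟩ := not_disjoint_iff.1 h
  rw [← orbitOf_eq_of_mem hadd hxp, orbitOf_eq_of_mem hadd hxq]

theorem isCompact_orbitOf [TopologicalSpace M] (hflow : IsFlow φ) {p : M}
    (hp : IsCriticalPt φ p) : IsCompact (orbitOf φ p) := by
  obtain ⟨hcont, -, hadd⟩ := hflow
  obtain ⟨T, hT, hTp⟩ := hp
  have hper : Function.Periodic (fun t => φ t p) T := fun t => by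
    simp only [hadd, hTp]
  rw [orbitOf, ← hper.image_Icc hT 0]
  exact isCompact_Icc.image (hcont.comp (continuous_id.prodMk continuous_const))

end Orbit

section Mixing

variable {M : Type*} {φ : ℝ → M → M}

theorem TopMixingOn.nonWandering_eq_univ [TopologicalSpace M] (h : TopMixingOn φ univ) :
    NonWandering φ = univ := by
  refine eq_univ_of_forall fun x U hU hxU T => ?_
  obtain ⟨N, -, hN⟩ := h U U hU hU ⟨x, hxU, trivial⟩ ⟨x, hxU, trivial⟩
  refine ⟨max T N, le_max_left T N, ?_⟩
  simpa only [inter_univ] using hN (max T N) (le_max_right T N)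

theorem not_topMixingOn_univ_of_disjoint_invariant [TopologicalSpace M] {U V : Set M}
    (hU : IsOpen U) (hV : IsOpen V) (hUne : U.Nonempty) (hVne : V.Nonempty)
    (hUV : Disjoint U V) (hVinv : InvariantSet φ V) : ¬ TopMixingOn φ univ := by
  intro h
  obtain ⟨x, hxU⟩ := hUne
  obtain ⟨y, hyV⟩ := hVne
  obtain ⟨N, -, hN⟩ := h U V hU hV ⟨x, hxU, trivial⟩ ⟨y, hyV, trivial⟩
  obtain ⟨-, ⟨z, ⟨hzV, -⟩, rfl⟩, hzU, -⟩ := hN N le_rfl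
  exact hUV.notMem_of_mem_left hzU (hVinv N z hzV)

theorem WeakSpec.topMixingOn_univ [MetricSpace M] (h0 : ∀ x, φ 0 x = x)
    (h : WeakSpec φ univ) : TopMixingOn φ univ := by
  rintro U V hU hV ⟨x, hxU, -⟩ ⟨y, hyV, -⟩
  obtain ⟨ε, hε, hεU⟩ := Metric.isOpen_iff.1 hU x hxU
  obtain ⟨δ, hδ, hδV⟩ := Metric.isOpen_iff.1 hV y hyV
  obtain ⟨K, hK, hspec⟩ := h (min ε δ) (lt_min hε hδ)
  refine ⟨K, hK, fun t ht => ?_⟩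
  obtain ⟨z, -, hzy, hzx⟩ :=
    hspec 0 0 t t le_rfl le_rfl (by linarith) y trivial x trivial
  have hz : dist z y < min ε δ := by
    simpa only [h0, sub_self] using hzy 0 ⟨le_rfl, le_rfl⟩
  have htz : dist (φ t z) x < min ε δ := by
    simpa only [h0, sub_self] using hzx t ⟨le_rfl, le_rfl⟩
  exact ⟨φ t z, ⟨z, ⟨hδV (hz.trans_le (min_le_right ε δ)), trivial⟩, rfl⟩,
    hεU (htz.trans_le (min_le_left ε δ)), trivial⟩

theorem MorseSmaleLike.not_topMixingOn_univ [TopologicalSpace M] [T2Space M] [Nonempty M]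
    (hMS : MorseSmaleLike φ) (hflow : IsFlow φ)
    (hnotorb : ∀ p : M, IsCriticalPt φ p → (univ : Set M) ≠ orbitOf φ p) :
    ¬ TopMixingOn φ univ := by
  intro hmix
  obtain ⟨F, hcrit, hNW⟩ := hMS
  have hadd := hflow.2.2
  have hcover : ⋃ p ∈ (F : Set M), orbitOf φ p = univ := by
    simpa only [Finset.mem_coe, hNW] using hmix.nonWandering_eq_univ
  have hopen : ∀ p ∈ F, IsOpen (orbitOf φ p) := fun p hp =>
    isOpen_of_biUnion_eq_univ F.finite_toSet hcover
      (fun q hq => (isCompact_orbitOf hflow (hcrit q hq)).isClosed)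
      (fun q _ r _ => orbitOf_disjoint_or_eq hadd q r) hp
  obtain ⟨x⟩ := ‹Nonempty M›
  obtain ⟨p, hpF, -⟩ := mem_iUnion₂.1 (hcover ▸ mem_univ x)
  obtain ⟨y, hyp⟩ := (ne_univ_iff_exists_notMem _).1 (hnotorb p (hcrit p hpF)).symm
  obtain ⟨q, hqF, hyq⟩ := mem_iUnion₂.1 (hcover ▸ mem_univ y)
  have hpq : Disjoint (orbitOf φ p) (orbitOf φ q) :=
    (orbitOf_disjoint_or_eq hadd p q).resolve_right fun h => hyp (h ▸ hyq)
  exact not_topMixingOn_univ_of_disjoint_invariant (hopen p hpF) (hopen q hqF)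
    ⟨p, mem_orbitOf_self hflow.2.1 p⟩ ⟨q, mem_orbitOf_self hflow.2.1 q⟩ hpq
    (invariantSet_orbitOf hadd q) hmix

end Mixing

theorem morse_smale_not_mixing_not_weak_specification_general
    {M : Type*} [MetricSpace M] [Nonempty M]
    (φ : ℝ → M → M) (hflow : IsFlow φ) (hMS : MorseSmaleLike φ)
    (hnotorb : ∀ p : M, IsCriticalPt φ p → (Set.univ : Set M) ≠ orbitOf φ p) :
    ¬ TopMixingOn φ Set.univ ∧ ¬ WeakSpec φ Set.univ := by
  have hnm := hMS.not_topMixingOn_univ hflow hnotorb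
  exact ⟨hnm, fun h => hnm (h.topMixingOn_univ hflow.2.1)⟩

/-- A Morse–Smale flow (on a closed surface, hence the whole space is never
a single critical orbit) cannot be topologically mixing; consequently no such flow has the
weak specification property. -/
theorem morse_smale_not_mixing_not_weak_specification
    {M : Type*} [MetricSpace M] [CompactSpace M] [Nonempty M]
    (φ : ℝ → M → M) (hflow : IsFlow φ) (hMS : MorseSmaleLike φ)
    (hnotorb : ∀ p : M, IsCriticalPt φ p → (Set.univ : Set M) ≠ orbitOf φ p) :
    ¬ TopMixingOn φ Set.univ ∧ ¬ WeakSpec φ Set.univ :=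
  morse_smale_not_mixing_not_weak_specification_general φ hflow hMS hnotorb
end

section
/- Let Λ be a compact invariant set with the weak specification property containing at least two distinct hyperbolic periodic orbits O(p) and O(q) of saddle type. For every ε ≤ min{ε(p), ε(q)} and corresponding spacing constant K = K(ε), there exists a point y ∈ W^{uu}_ε(p) with X_K(y) ∈ W^{ss}_ε(q); in particular W^u(O(p)) ∩ W^s(O(q)) ≠ ∅. -/
open Filter Set Metric TensorProduct

/-! The specification property glues the backward `ε`-orbit of `p` on `[0, T]` to the forward
`ε`-orbit of `q` on `[0, T]` after a gap `K`. The points doing so for horizon `T` form a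
decreasing family of nonempty closed subsets of the compact set `Λ`; a point of their
intersection lies in `W^{uu}_ε(p)` and is carried by `X_K` into `W^{ss}_ε(q)`, so the
stable manifold theorem puts it in `W^u(O(p)) ∩ W^s(O(q))`. -/

section Flow
variable {M : Type*}

theorem IsFlow.continuous_apply [TopologicalSpace M] {φ : ℝ → M → M} (hφ : IsFlow φ)
    (t : ℝ) : Continuous (φ t) :=
  hφ.1.comp (continuous_const.prodMk continuous_id)

theorem IsCompact.exists_mem_forall_of_forall_Icc [TopologicalSpace M] [T2Space M]
    {Λ : Set M} (hΛ : IsCompact Λ) {P : ℝ → M → Prop} (hP : ∀ t, IsClosed {x | P t x})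
    (h : ∀ T, 0 ≤ T → ∃ x ∈ Λ, ∀ t ∈ Icc 0 T, P t x) :
    ∃ x ∈ Λ, ∀ t, 0 ≤ t → P t x := by
  set C : ℝ → Set M := fun T => ⋂ t ∈ Icc 0 T, {x | P t x}
  have hC_closed : ∀ T, IsClosed (C T) := fun T => isClosed_biInter fun t _ => hP t
  have hC_anti : Antitone fun T => Λ ∩ C T := fun T T' hTT' =>
    inter_subset_inter_right _ <| biInter_subset_biInter_left <| Icc_subset_Icc_right hTT'
  have hC_nonempty : ∀ T, (Λ ∩ C T).Nonempty := fun T => by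
    obtain ⟨x, hxΛ, hx⟩ := h (max T 0) (le_max_right _ _)
    exact ⟨x, hC_anti (le_max_left T 0) ⟨hxΛ, mem_iInter₂.mpr hx⟩⟩
  obtain ⟨x, hx⟩ := IsCompact.nonempty_iInter_of_directed_nonempty_isCompact_isClosed _
    hC_anti.directed_ge hC_nonempty (fun T => hΛ.inter_right (hC_closed T))
    (fun T => hΛ.isClosed.inter (hC_closed T))
  have hxC : ∀ T, x ∈ Λ ∩ C T := mem_iInter.mp hx
  exact ⟨x, (hxC 0).1, fun t ht => mem_iInter₂.mp (hxC t).2 t ⟨ht, le_rfl⟩⟩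

/-- The orbit segments shadowed are `X_{[-T, 0]}(p)`, parametrized over `[0, T]`, and
`X_{[0, T]}(q)`, parametrized over `[T + K, 2T + K]`; the witness is the shadowing point moved
by `X_T`. -/
theorem SpecConst.exists_mem_shadowing_past_and_future [MetricSpace M] {φ : ℝ → M → M}
    {Λ : Set M} {ε K : ℝ} (hspec : SpecConst φ Λ ε K) (hΛi : InvariantSet φ Λ)
    (hadd : ∀ s t x, φ (s + t) x = φ s (φ t x)) {p q : M} (hp : p ∈ Λ) (hq : q ∈ Λ)
    {T : ℝ} (hT : 0 ≤ T) :
    ∃ y ∈ Λ, ∀ t ∈ Icc 0 T,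
      dist (φ (-t) y) (φ (-t) p) < ε ∧ dist (φ t (φ K y)) (φ t q) < ε := by
  obtain ⟨z, hzΛ, hpast, hfuture⟩ :=
    hspec 0 T (T + K) (2 * T + K) hT (by linarith) le_rfl (φ (-T) p) (hΛi _ _ hp) q hq
  refine ⟨φ T z, hΛi _ _ hzΛ, fun t ⟨ht0, htT⟩ => ⟨?_, ?_⟩⟩
  · have hshift : φ (-t) (φ T z) = φ (T - t) z := by rw [← hadd]; ring_nf
    have hp_shift : φ (T - t - 0) (φ (-T) p) = φ (-t) p := by rw [← hadd]; ring_nf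
    simpa only [hshift, hp_shift] using hpast (T - t) ⟨by linarith, by linarith⟩
  · have hshift : φ t (φ K (φ T z)) = φ (t + (T + K)) z := by
      rw [← hadd, ← hadd]; ring_nf
    simpa only [hshift, add_sub_cancel_right] using
      hfuture (t + (T + K)) ⟨by linarith, by linarith⟩

theorem mem_Wss_of_apply_mem [MetricSpace M] {φ : ℝ → M → M}
    (hadd : ∀ s t x, φ (s + t) x = φ s (φ t x)) {x y : M} {τ : ℝ}
    (h : φ τ y ∈ Wss φ x) : y ∈ Wss φ (φ (-τ) x) := by
  have hshift : Tendsto (fun t : ℝ => t - τ) atTop atTop :=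
    tendsto_atTop_add_const_right _ _ tendsto_id
  refine (h.comp hshift).congr fun t => ?_
  rw [Function.comp_apply, ← hadd, ← hadd, sub_add_cancel, sub_eq_add_neg]

theorem mem_WsOrb_of_apply_mem [MetricSpace M] {φ : ℝ → M → M}
    (hadd : ∀ s t x, φ (s + t) x = φ s (φ t x)) {x y : M} {τ : ℝ}
    (h : φ τ y ∈ WsOrb φ x) : y ∈ WsOrb φ x := by
  obtain ⟨s, hs⟩ := mem_iUnion.mp h
  exact mem_iUnion.mpr ⟨-τ + s, by simpa only [hadd] using mem_Wss_of_apply_mem hadd hs⟩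

end Flow

theorem local_manifolds_connected_by_specification_general
    {E : Type*} [NormedAddCommGroup E]
    (φ : ℝ → E → E)
    (hflow : IsFlow φ)
    (Λ : Set E) (hΛc : IsCompact Λ) (hΛi : InvariantSet φ Λ)
    (p q : E) (hpΛ : p ∈ Λ) (hqΛ : q ∈ Λ)
    (εp εq : ℝ)
    (hlocp : ∀ y : E, (∀ t : ℝ, 0 ≤ t → dist (φ (-t) y) (φ (-t) p) ≤ εp) → y ∈ WuOrb φ p)
    (hlocq : ∀ y : E, (∀ t : ℝ, 0 ≤ t → dist (φ t y) (φ t q) ≤ εq) → y ∈ WsOrb φ q)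
    (ε K : ℝ) (hεle : ε ≤ min εp εq)
    (hspec : SpecConst φ Λ ε K) :
    (∃ y : E, (∀ t : ℝ, 0 ≤ t → dist (φ (-t) y) (φ (-t) p) ≤ ε) ∧
      (∀ t : ℝ, 0 ≤ t → dist (φ t (φ K y)) (φ t q) ≤ ε)) ∧
    (WuOrb φ p ∩ WsOrb φ q).Nonempty := by
  have hadd := hflow.2.2
  have hclosed : ∀ t, IsClosed
      {y | dist (φ (-t) y) (φ (-t) p) ≤ ε ∧ dist (φ t (φ K y)) (φ t q) ≤ ε} := fun t =>
    (isClosed_le ((hflow.continuous_apply _).dist continuous_const) continuous_const).inter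
      (isClosed_le (((hflow.continuous_apply _).comp (hflow.continuous_apply _)).dist
        continuous_const) continuous_const)
  obtain ⟨y, -, hy⟩ := hΛc.exists_mem_forall_of_forall_Icc hclosed fun T hT => by
    obtain ⟨y, hyΛ, hy⟩ := hspec.exists_mem_shadowing_past_and_future hΛi hadd hpΛ hqΛ hT
    exact ⟨y, hyΛ, fun t ht => ⟨(hy t ht).1.le, (hy t ht).2.le⟩⟩
  have hyu : y ∈ WuOrb φ p :=
    hlocp y fun t ht => (hy t ht).1.trans (hεle.trans (min_le_left _ _))
  have hys : y ∈ WsOrb φ q := mem_WsOrb_of_apply_mem hadd <|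
    hlocq (φ K y) fun t ht => (hy t ht).2.trans (hεle.trans (min_le_right _ _))
  exact ⟨⟨y, fun t ht => (hy t ht).1, fun t ht => (hy t ht).2⟩, y, hyu, hys⟩

/-- Let `Λ` have the weak specification property and contain two distinct
hyperbolic periodic orbits `O(p)`, `O(q)` of saddle type. For every
`ε ≤ min (ε(p)) (ε(q))` (the sizes given by the stable manifold theorem, so that the
local strong invariant manifolds of size `ε(p)`, `ε(q)` are contained in the global
ones) and every spacing constant `K` for `ε`, there is `y ∈ W^{uu}_ε(p)` with
`X_K(y) ∈ W^{ss}_ε(q)`; in particular `W^u(O(p)) ∩ W^s(O(q)) ≠ ∅`. -/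
theorem local_manifolds_connected_by_specification
    {E : Type*} [NormedAddCommGroup E] [NormedSpace ℝ E] [FiniteDimensional ℝ E]
    (X : E → E) (φ : ℝ → E → E) (hX : ContDiff ℝ 1 X)
    (hflow : IsFlow φ) (hgen : GeneratedBy X φ)
    (Λ : Set E) (hΛc : IsCompact Λ) (hΛi : InvariantSet φ Λ) (hweak : WeakSpec φ Λ)
    (p q : E) (hpΛ : p ∈ Λ) (hqΛ : q ∈ Λ)
    (hp : HypPeriodic X φ p) (hq : HypPeriodic X φ q)
    (hsp : IsSaddlePeriodic X φ p) (hsq : IsSaddlePeriodic X φ q)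
    (hdistinct : orbitOf φ p ≠ orbitOf φ q)
    (εp εq : ℝ) (hεp : 0 < εp) (hεq : 0 < εq)
    (hlocp : ∀ y : E, (∀ t : ℝ, 0 ≤ t → dist (φ (-t) y) (φ (-t) p) ≤ εp) → y ∈ WuOrb φ p)
    (hlocq : ∀ y : E, (∀ t : ℝ, 0 ≤ t → dist (φ t y) (φ t q) ≤ εq) → y ∈ WsOrb φ q)
    (ε K : ℝ) (hε : 0 < ε) (hεle : ε ≤ min εp εq) (hK : 0 < K)
    (hspec : SpecConst φ Λ ε K) :
    (∃ y : E, (∀ t : ℝ, 0 ≤ t → dist (φ (-t) y) (φ (-t) p) ≤ ε) ∧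
      (∀ t : ℝ, 0 ≤ t → dist (φ t (φ K y)) (φ t q) ≤ ε)) ∧
    (WuOrb φ p ∩ WsOrb φ q).Nonempty :=
  local_manifolds_connected_by_specification_general φ hflow Λ hΛc hΛi p q hpΛ hqΛ εp εq hlocp hlocq
    ε K hεle hspec
end
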